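/- The transmuted product is a morphism of left H-modules for the adjoint action: for all h, b, b′ ∈ H, h▷(b ·̲ b′) = (h₁▷b) ·̲ (h₂▷b′). -/

import Mathlib

open scoped TensorProduct
open TensorProduct

structure QuasiHopf (k H : Type) [Field k] [Ring H] [Algebra k H] where
  comul : H →ₐ[k] H ⊗[k] H
  counit : H →ₐ[k] k
  counit_left : ∀ h : H,
    (TensorProduct.lid k H) ((TensorProduct.map counit.toLinearMap (LinearMap.id : H →ₗ[k] H)) (comul h)) = h
  counit_right : ∀ h : H,
    (TensorProduct.rid k H) ((TensorProduct.map (LinearMap.id : H →ₗ[k] H) counit.toLinearMap) (comul h)) = h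
  phi : H ⊗[k] (H ⊗[k] H)
  phiInv : H ⊗[k] (H ⊗[k] H)
  phi_inv : phi * phiInv = 1
  inv_phi : phiInv * phi = 1
  quasi_coassoc : ∀ h : H,
    (TensorProduct.map (LinearMap.id : H →ₗ[k] H) comul.toLinearMap) (comul h)
      = phi * ((TensorProduct.assoc k H H H)
          ((TensorProduct.map comul.toLinearMap (LinearMap.id : H →ₗ[k] H)) (comul h))) * phiInv
  pentagon :
    ((1 : H) ⊗ₜ[k] phi)
      * ((TensorProduct.map (LinearMap.id : H →ₗ[k] H)
            ((TensorProduct.assoc k H H H).toLinearMap ∘ₗ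
              TensorProduct.map comul.toLinearMap (LinearMap.id : H →ₗ[k] H))) phi)
      * ((TensorProduct.map (LinearMap.id : H →ₗ[k] H) (TensorProduct.assoc k H H H).toLinearMap)
            ((TensorProduct.assoc k H (H ⊗[k] H) H) (phi ⊗ₜ[k] (1 : H))))
    = ((TensorProduct.map (LinearMap.id : H →ₗ[k] H)
          (TensorProduct.map (LinearMap.id : H →ₗ[k] H) comul.toLinearMap)) phi)
      * ((TensorProduct.assoc k H H (H ⊗[k] H))
          ((TensorProduct.map comul.toLinearMap (LinearMap.id : H ⊗[k] H →ₗ[k] H ⊗[k] H)) phi))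
  counit_phi :
    (TensorProduct.map (LinearMap.id : H →ₗ[k] H)
        ((TensorProduct.lid k H).toLinearMap ∘ₗ
          TensorProduct.map counit.toLinearMap (LinearMap.id : H →ₗ[k] H))) phi = 1
  S : H →ₗ[k] H
  Sinv : H →ₗ[k] H
  S_mul : ∀ a b : H, S (a * b) = S b * S a
  S_one : S 1 = 1
  S_Sinv : ∀ h : H, S (Sinv h) = h
  Sinv_S : ∀ h : H, Sinv (S h) = h
  alpha : H
  beta : H
  antipode_left : ∀ (h : H) (n : ℕ) (h1 h2 : Fin n → H),
    comul h = ∑ i, h1 i ⊗ₜ[k] h2 i → ∑ i, S (h1 i) * alpha * h2 i = counit h • alpha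
  antipode_right : ∀ (h : H) (n : ℕ) (h1 h2 : Fin n → H),
    comul h = ∑ i, h1 i ⊗ₜ[k] h2 i → ∑ i, h1 i * beta * S (h2 i) = counit h • beta
  antipode_phi : ∀ (n : ℕ) (X1 X2 X3 : Fin n → H),
    phi = ∑ i, X1 i ⊗ₜ[k] (X2 i ⊗ₜ[k] X3 i) →
      ∑ i, X1 i * beta * S (X2 i) * alpha * X3 i = 1
  antipode_phiInv : ∀ (n : ℕ) (x1 x2 x3 : Fin n → H),
    phiInv = ∑ i, x1 i ⊗ₜ[k] (x2 i ⊗ₜ[k] x3 i) →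
      ∑ i, S (x1 i) * alpha * x2 i * beta * S (x3 i) = 1


/-! Write the transmuted product as `b ·̲ b' = T_{b,b'}(φ⁻¹)` for the linear form
`T_{b,b'}(u ⊗ v ⊗ w) = q¹(u ▷ b)S(q²) · v b' S(w)`. Quasi-coassociativity together with
`S(g₁)αg₂ = ε(g)α` gives `q¹(g₁ ▷ c)S(q²)g₂ = g q¹cS(q²)`, so acting by `h` on `T(φ⁻¹)` yields
`T((Δ ⊗ id)Δ(h) · φ⁻¹) = T(φ⁻¹ · (id ⊗ Δ)Δ(h))`; a right factor `x ⊗ Δ(y)` is absorbed into `T`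
by replacing `b, b'` with `x ▷ b, y ▷ b'`. -/

theorem TensorProduct.exists_sum_tmul_tmul_eq {R M N P : Type*} [CommSemiring R]
    [AddCommMonoid M] [AddCommMonoid N] [AddCommMonoid P] [Module R M] [Module R N] [Module R P]
    (x : M ⊗[R] (N ⊗[R] P)) :
    ∃ (n : ℕ) (f : Fin n → M) (g : Fin n → N) (h : Fin n → P),
      x = ∑ i, f i ⊗ₜ[R] (g i ⊗ₜ[R] h i) := by
  induction x with
  | zero => exact ⟨0, ![], ![], ![], by simp⟩
  | tmul m y =>
    obtain ⟨n, g, h, rfl⟩ := exists_sum_tmul_eq y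
    exact ⟨n, fun _ => m, g, h, tmul_sum _ _ _⟩
  | add x y hx hy =>
    obtain ⟨n, f, g, h, rfl⟩ := hx
    obtain ⟨m, f', g', h', rfl⟩ := hy
    exact ⟨n + m, Fin.addCases f f', Fin.addCases g g', Fin.addCases h h', by
      simp [Fin.sum_univ_add]⟩

namespace QuasiHopf

variable {k H : Type} [Field k] [Ring H] [Algebra k H] (Q : QuasiHopf k H)

/-- `Q.sandwich (Q.comul h) b` is the adjoint action `h ▷ b`. -/
noncomputable def sandwich : H ⊗[k] H →ₗ[k] Module.End k H :=
  LinearMap.mul' k (Module.End k H) ∘ₗ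
    map (LinearMap.mul k H) ((LinearMap.mul k H).flip ∘ₗ Q.S)

@[simp] theorem sandwich_tmul (x y b : H) : Q.sandwich (x ⊗ₜ y) b = x * (b * Q.S y) := rfl

theorem sandwich_mul (s t : H ⊗[k] H) : Q.sandwich (s * t) = Q.sandwich s * Q.sandwich t := by
  induction s with
  | zero => simp
  | add s s' hs hs' => simp [add_mul, hs, hs']
  | tmul x y =>
    induction t with
    | zero => simp
    | add t t' ht ht' => simp [mul_add, ht, ht']
    | tmul x' y' => ext b; simp [Q.S_mul, mul_assoc]

noncomputable def sAlpha : H ⊗[k] H →ₗ[k] H :=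
  LinearMap.mul' k H ∘ₗ map ((LinearMap.mul k H).flip Q.alpha ∘ₗ Q.S) LinearMap.id

@[simp] theorem sAlpha_tmul (x y : H) : Q.sAlpha (x ⊗ₜ y) = Q.S x * Q.alpha * y := rfl

theorem sAlpha_mul_tmul (t : H ⊗[k] H) (u v : H) :
    Q.sAlpha (t * (u ⊗ₜ v)) = Q.S u * Q.sAlpha t * v := by
  induction t with
  | zero => simp
  | add t t' ht ht' => simp [add_mul, mul_add, ht, ht']
  | tmul x y => simp [Q.S_mul, mul_assoc]

theorem sAlpha_comul (g : H) : Q.sAlpha (Q.comul g) = Q.counit g • Q.alpha := by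
  obtain ⟨n, g₁, g₂, hg⟩ := exists_sum_tmul_eq (Q.comul g)
  rw [← Q.antipode_left g n g₁ g₂ hg, hg, map_sum]
  rfl

theorem sAlpha_comul_mul (g : H) (t : H ⊗[k] H) :
    Q.sAlpha (Q.comul g * t) = Q.counit g • Q.sAlpha t := by
  induction t with
  | zero => simp
  | add t t' ht ht' => simp [mul_add, ht, ht']
  | tmul u v => simp [sAlpha_mul_tmul, sAlpha_comul]

/-- `Q.alphaSandwich Q.phi c = q¹ c S(q²)`, as `S(S⁻¹(αX³)X²) = S(X²)αX³`. -/
noncomputable def alphaSandwich : H ⊗[k] (H ⊗[k] H) →ₗ[k] Module.End k H :=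
  LinearMap.mul' k (Module.End k H) ∘ₗ
    map (LinearMap.mul k H) ((LinearMap.mul k H).flip ∘ₗ Q.sAlpha)

@[simp] theorem alphaSandwich_tmul (x c : H) (t : H ⊗[k] H) :
    Q.alphaSandwich (x ⊗ₜ t) c = x * (c * Q.sAlpha t) := rfl

theorem alphaSandwich_mul_tmul (s : H ⊗[k] (H ⊗[k] H)) (x y z c : H) :
    Q.alphaSandwich (s * (x ⊗ₜ (y ⊗ₜ z))) c
      = Q.alphaSandwich s (Q.sandwich (x ⊗ₜ y) c) * z := by
  induction s with
  | zero => simp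
  | add s s' hs hs' => simp [add_mul, hs, hs']
  | tmul u t => simp [sAlpha_mul_tmul, mul_assoc]

theorem alphaSandwich_mul_assoc_tmul (s : H ⊗[k] (H ⊗[k] H)) (t : H ⊗[k] H) (v c : H) :
    Q.alphaSandwich (s * TensorProduct.assoc k H H H (t ⊗ₜ v)) c
      = Q.alphaSandwich s (Q.sandwich t c) * v := by
  induction t with
  | zero => simp
  | add t t' ht ht' => simp [add_tmul, mul_add, add_mul, ht, ht']
  | tmul x y => simp [alphaSandwich_mul_tmul]

theorem alphaSandwich_lTensor_comul_mul (r : H ⊗[k] H) (w : H ⊗[k] (H ⊗[k] H)) (c : H) :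
    Q.alphaSandwich (map LinearMap.id Q.comul.toLinearMap r * w) c
      = TensorProduct.rid k H (map LinearMap.id Q.counit.toLinearMap r) * Q.alphaSandwich w c := by
  induction r with
  | zero => simp
  | add r r' hr hr' => simp [add_mul, hr, hr']
  | tmul u v =>
    induction w with
    | zero => simp
    | add w w' hw hw' =>
      rw [mul_add, map_add, LinearMap.add_apply, hw, hw', map_add, LinearMap.add_apply, mul_add]
    | tmul x t => simp [sAlpha_comul_mul, mul_assoc]

noncomputable def qConj (b : H) : H →ₗ[k] H :=
  Q.alphaSandwich Q.phi ∘ₗ Q.sandwich.flip b ∘ₗ Q.comul.toLinearMap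

theorem qConj_apply (b u : H) :
    Q.qConj b u = Q.alphaSandwich Q.phi (Q.sandwich (Q.comul u) b) := rfl

theorem qConj_mul (b u v : H) : Q.qConj b (u * v) = Q.qConj (Q.sandwich (Q.comul v) b) u := by
  simp [qConj_apply, sandwich_mul]

theorem phi_mul_assoc_rTensor_comul (h : H) :
    Q.phi * TensorProduct.assoc k H H H (map Q.comul.toLinearMap LinearMap.id (Q.comul h))
      = map LinearMap.id Q.comul.toLinearMap (Q.comul h) * Q.phi := by
  rw [Q.quasi_coassoc h, mul_assoc, Q.inv_phi, mul_one]

theorem assoc_rTensor_comul_mul_phiInv (h : H) :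
    TensorProduct.assoc k H H H (map Q.comul.toLinearMap LinearMap.id (Q.comul h)) * Q.phiInv
      = Q.phiInv * map LinearMap.id Q.comul.toLinearMap (Q.comul h) := by
  rw [Q.quasi_coassoc h, ← mul_assoc, ← mul_assoc, Q.inv_phi, one_mul]

theorem mul'_map_qConj_eq (c : H) (r : H ⊗[k] H) :
    LinearMap.mul' k H (map (Q.qConj c) LinearMap.id r)
      = Q.alphaSandwich
          (Q.phi * TensorProduct.assoc k H H H (map Q.comul.toLinearMap LinearMap.id r)) c := by
  induction r with
  | zero => simp
  | add r r' hr hr' => simp only [map_add, mul_add, LinearMap.add_apply, hr, hr']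
  | tmul u v => simp [alphaSandwich_mul_assoc_tmul, qConj_apply]

theorem mul'_map_qConj_comul (c g : H) :
    LinearMap.mul' k H (map (Q.qConj c) LinearMap.id (Q.comul g))
      = g * Q.alphaSandwich Q.phi c := by
  rw [mul'_map_qConj_eq, phi_mul_assoc_rTensor_comul, alphaSandwich_lTensor_comul_mul,
    Q.counit_right]

noncomputable def transmutedMulForm (b b' : H) : H ⊗[k] (H ⊗[k] H) →ₗ[k] H :=
  LinearMap.mul' k H ∘ₗ map (Q.qConj b) (Q.sandwich.flip b')

@[simp] theorem transmutedMulForm_tmul (b b' u : H) (t : H ⊗[k] H) :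
    Q.transmutedMulForm b b' (u ⊗ₜ t) = Q.qConj b u * Q.sandwich t b' := rfl

theorem transmutedMulForm_assoc_tmul_mul_tmul (b b' y u : H) (r t : H ⊗[k] H) :
    Q.transmutedMulForm b b' (TensorProduct.assoc k H H H (r ⊗ₜ y) * (u ⊗ₜ t))
      = LinearMap.mul' k H (map (Q.qConj (Q.sandwich (Q.comul u) b)) LinearMap.id r)
          * Q.sandwich t b' * Q.S y := by
  induction r with
  | zero => simp
  | add r r' hr hr' => simp only [add_tmul, map_add, add_mul, hr, hr']
  | tmul x x' => simp [sandwich_mul, qConj_mul, mul_assoc]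

theorem sandwich_transmutedMulForm (b b' : H) (r : H ⊗[k] H) (w : H ⊗[k] (H ⊗[k] H)) :
    Q.sandwich r (Q.transmutedMulForm b b' w)
      = Q.transmutedMulForm b b'
          (TensorProduct.assoc k H H H (map Q.comul.toLinearMap LinearMap.id r) * w) := by
  induction r with
  | zero => simp
  | add r r' hr hr' => simp only [map_add, add_mul, LinearMap.add_apply, hr, hr']
  | tmul x y =>
    induction w with
    | zero => simp
    | add w w' hw hw' => simp only [map_add, mul_add, hw, hw']
    | tmul u t =>
      rw [map_tmul, AlgHom.toLinearMap_apply, LinearMap.id_apply,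
        transmutedMulForm_assoc_tmul_mul_tmul, mul'_map_qConj_comul]
      simp [qConj_apply, mul_assoc]

theorem transmutedMulForm_mul_tmul_comul (b b' x y : H) (w : H ⊗[k] (H ⊗[k] H)) :
    Q.transmutedMulForm b b' (w * (x ⊗ₜ Q.comul y))
      = Q.transmutedMulForm (Q.sandwich (Q.comul x) b) (Q.sandwich (Q.comul y) b') w := by
  induction w with
  | zero => simp
  | add w w' hw hw' => simp only [add_mul, map_add, hw, hw']
  | tmul u t => simp [qConj_mul, sandwich_mul]

theorem sandwich_comul_eq_sum {c : H} {n : ℕ} {c₁ c₂ : Fin n → H}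
    (hc : Q.comul c = ∑ i, c₁ i ⊗ₜ[k] c₂ i) (b : H) :
    Q.sandwich (Q.comul c) b = ∑ i, c₁ i * b * Q.S (c₂ i) := by
  simp [hc, mul_assoc]

theorem transmutedMulForm_phiInv_eq_sum {nX : ℕ} {X1 X2 X3 : Fin nX → H}
    (hφ : Q.phi = ∑ c, X1 c ⊗ₜ[k] (X2 c ⊗ₜ[k] X3 c)) {nx : ℕ} {x1 x2 x3 : Fin nx → H}
    (hφinv : Q.phiInv = ∑ i, x1 i ⊗ₜ[k] (x2 i ⊗ₜ[k] x3 i)) (b b' : H) :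
    Q.transmutedMulForm b b' Q.phiInv = ∑ c, ∑ i,
      X1 c * Q.sandwich (Q.comul (x1 i)) b * Q.S (Q.Sinv (Q.alpha * X3 c) * X2 c)
        * (x2 i * b' * Q.S (x3 i)) := by
  rw [Finset.sum_comm, hφinv, map_sum]
  refine Finset.sum_congr rfl fun i _ => ?_
  simp [qConj_apply, hφ, Finset.sum_mul, Q.S_mul, Q.S_Sinv, mul_assoc]

theorem sandwich_comul_transmutedMulForm_phiInv {h : H} {n : ℕ} {h₁ h₂ : Fin n → H}
    (hh : Q.comul h = ∑ j, h₁ j ⊗ₜ[k] h₂ j) (b b' : H) :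
    Q.sandwich (Q.comul h) (Q.transmutedMulForm b b' Q.phiInv)
      = ∑ j, Q.transmutedMulForm (Q.sandwich (Q.comul (h₁ j)) b)
          (Q.sandwich (Q.comul (h₂ j)) b') Q.phiInv := by
  rw [sandwich_transmutedMulForm, assoc_rTensor_comul_mul_phiInv, hh]
  simp only [map_sum, map_tmul, Finset.mul_sum, LinearMap.id_apply, AlgHom.toLinearMap_apply,
    transmutedMulForm_mul_tmul_comul]

end QuasiHopf

/-- the transmuted product `b ·̲ b′ = q¹(x¹▷b)S(q²)x²b′S(x³)` is a morphism
of left `H`-modules for the adjoint action: `h ▷ (b ·̲ b′) = (h₁ ▷ b) ·̲ (h₂ ▷ b′)`. -/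
theorem stmt4 {k H : Type} [Field k] [Ring H] [Algebra k H] (Q : QuasiHopf k H)
    (ad : H → H → H)
    (had : ∀ (c b : H) (n : ℕ) (c1 c2 : Fin n → H),
      Q.comul c = ∑ i, c1 i ⊗ₜ[k] c2 i → ad c b = ∑ i, c1 i * b * Q.S (c2 i))
    (mulU : H → H → H)
    (hmulU : ∀ (b b' : H) (nX : ℕ) (X1 X2 X3 : Fin nX → H) (nx : ℕ) (x1 x2 x3 : Fin nx → H),
      Q.phi = ∑ c, X1 c ⊗ₜ[k] (X2 c ⊗ₜ[k] X3 c) →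
      Q.phiInv = ∑ i, x1 i ⊗ₜ[k] (x2 i ⊗ₜ[k] x3 i) →
      mulU b b' = ∑ c, ∑ i,
        X1 c * ad (x1 i) b * Q.S (Q.Sinv (Q.alpha * X3 c) * X2 c)
          * (x2 i * b' * Q.S (x3 i)))
    (h b b' : H) (n : ℕ) (h1 h2 : Fin n → H)
    (hh : Q.comul h = ∑ j, h1 j ⊗ₜ[k] h2 j) :
    ad h (mulU b b') = ∑ j, mulU (ad (h1 j) b) (ad (h2 j) b') := by
  have ad_eq (c b : H) : ad c b = Q.sandwich (Q.comul c) b := by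
    obtain ⟨m, c₁, c₂, hc⟩ := exists_sum_tmul_eq (Q.comul c)
    rw [had c b m c₁ c₂ hc, Q.sandwich_comul_eq_sum hc]
  obtain ⟨nX, X1, X2, X3, hφ⟩ := exists_sum_tmul_tmul_eq Q.phi
  obtain ⟨nx, x1, x2, x3, hφinv⟩ := exists_sum_tmul_tmul_eq Q.phiInv
  have mulU_eq (b b' : H) : mulU b b' = Q.transmutedMulForm b b' Q.phiInv := by
    simp only [hmulU b b' nX X1 X2 X3 nx x1 x2 x3 hφ hφinv,
      Q.transmutedMulForm_phiInv_eq_sum hφ hφinv, ad_eq]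
  simp only [mulU_eq, ad_eq, Q.sandwich_comul_transmutedMulForm_phiInv hh]
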